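/- For minimum spanning trees, there exist an MST T⁺ containing a given non-bridge edge e of minimum weight among spanning trees containing e, and an edge f ≠ e, such that T⁻ := T⁺ − e + f is a minimum-weight spanning tree among those avoiding e; i.e., the two constrained optima differ by a single edge exchange. -/

import Mathlib

open scoped Classical in
/-- Total weight of the edges of a graph (used for spanning trees). -/
noncomputable def twt {V : Type*} [Fintype V] [DecidableEq V]
    (w : Sym2 V → ℝ) (T : SimpleGraph V) : ℝ :=
  ∑ e ∈ Finset.univ.filter (fun e => e ∈ T.edgeSet), w e

/-- `T` is a spanning tree of `G`: a subgraph (on the same vertex set) which is a tree. -/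
def IsSpanningTree {V : Type*} (G T : SimpleGraph V) : Prop :=
  T ≤ G ∧ T.IsTree

/-- `T` is a minimum spanning tree of `G` for the weights `w`. -/
def IsMST {V : Type*} [Fintype V] [DecidableEq V]
    (G : SimpleGraph V) (w : Sym2 V → ℝ) (T : SimpleGraph V) : Prop :=
  IsSpanningTree G T ∧ ∀ T', IsSpanningTree G T' → twt w T ≤ twt w T'

namespace StmtAux

open SimpleGraph

variable {V : Type*}

lemma side_total' {G : SimpleGraph V} {x y : V} :
    ∀ {z c : V}, G.Walk z c →
      ((G.deleteEdges {s(x,y)}).Reachable x c ∨ (G.deleteEdges {s(x,y)}).Reachable y c) →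
      ((G.deleteEdges {s(x,y)}).Reachable x z ∨ (G.deleteEdges {s(x,y)}).Reachable y z) := by
  intro z c p
  induction p with
  | nil => exact id
  | @cons z m c h q ih =>
    intro hc
    by_cases hd : s(z, m) = s(x, y)
    · rw [Sym2.eq_iff] at hd
      rcases hd with ⟨rfl, rfl⟩ | ⟨rfl, rfl⟩
      · exact Or.inl (Reachable.refl _)
      · exact Or.inr (Reachable.refl _)
    · have hadj : (G.deleteEdges {s(x,y)}).Adj z m :=
        deleteEdges_adj.mpr ⟨h, by simpa using hd⟩
      rcases ih hc with h1 | h1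
      · exact Or.inl (h1.trans hadj.reachable.symm)
      · exact Or.inr (h1.trans hadj.reachable.symm)

lemma side_total {G : SimpleGraph V} (hG : G.Preconnected) (x y z : V) :
    (G.deleteEdges {s(x,y)}).Reachable x z ∨ (G.deleteEdges {s(x,y)}).Reachable y z := by
  obtain ⟨p⟩ := hG z x
  exact side_total' p (Or.inl (Reachable.refl _))

lemma parity_count [DecidableEq V] {G : SimpleGraph V} {u v : V}
    (hsep : ¬ (G.deleteEdges {s(u,v)}).Reachable u v) :
    ∀ {a c : V} (q : G.Walk a c),
      (((G.deleteEdges {s(u,v)}).Reachable u a ↔ (G.deleteEdges {s(u,v)}).Reachable u c)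
        ↔ Even (q.edges.count s(u,v))) := by
  intro a c q
  induction q with
  | nil => simp
  | @cons a m c h q ih =>
    by_cases hd : s(a, m) = s(u, v)
    · rw [Walk.edges_cons, hd, List.count_cons_self, Nat.even_add_one, ← ih]
      have hu : (G.deleteEdges {s(u,v)}).Reachable u u := Reachable.refl _
      rw [Sym2.eq_iff] at hd
      rcases hd with ⟨rfl, rfl⟩ | ⟨rfl, rfl⟩ <;> tauto
    · rw [Walk.edges_cons, List.count_cons_of_ne hd, ← ih]
      have hadj : (G.deleteEdges {s(u,v)}).Adj a m :=
        deleteEdges_adj.mpr ⟨h, by simpa using hd⟩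
      have hm : ((G.deleteEdges {s(u,v)}).Reachable u a ↔ (G.deleteEdges {s(u,v)}).Reachable u m) :=
        ⟨fun h2 => h2.trans hadj.reachable, fun h2 => h2.trans hadj.reachable.symm⟩
      rw [hm]

lemma cross_walk {W : SimpleGraph V} (X Y : V → Prop)
    (htot : ∀ z, X z ∨ Y z) (hdisj : ∀ z, ¬ (X z ∧ Y z)) :
    ∀ {a c : V} (q : W.Walk a c), X a → Y c →
      ∃ s t, s(s,t) ∈ q.edges ∧ X s ∧ Y t := by
  intro a c q
  induction q with
  | nil => exact fun hx hy => absurd ⟨hx, hy⟩ (hdisj _)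
  | @cons a m c h q ih =>
    intro hx hy
    rcases htot m with hm | hm
    · obtain ⟨s, t, h1, h2, h3⟩ := ih hm hy
      exact ⟨s, t, List.mem_cons_of_mem _ h1, h2, h3⟩
    · exact ⟨a, m, by rw [Walk.edges_cons]; exact List.mem_cons_self, hx, hm⟩

lemma swap_aux [DecidableEq V] {G T : SimpleGraph V} (hle : T ≤ G) (hT : T.IsTree)
    {x y u v : V} (hxy : s(x,y) ∈ G.edgeSet) (haT : s(x,y) ∉ T.edgeSet)
    (huv : s(u,v) ∈ T.edgeSet)
    (hsep : ¬ (T.deleteEdges {s(u,v)}).Reachable u v)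
    (hux : (T.deleteEdges {s(u,v)}).Reachable u x)
    (hvy : (T.deleteEdges {s(u,v)}).Reachable v y) :
    fromEdgeSet ((T.edgeSet \ {s(u,v)}) ∪ {s(x,y)}) ≤ G ∧
    (fromEdgeSet ((T.edgeSet \ {s(u,v)}) ∪ {s(x,y)})).IsTree ∧
    s(x,y) ∈ (fromEdgeSet ((T.edgeSet \ {s(u,v)}) ∪ {s(x,y)})).edgeSet := by
  have hxne : x ≠ y := (G.mem_edgeSet.mp hxy).ne
  set S := (T.edgeSet \ {s(u,v)}) ∪ {s(x,y)} with hS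
  have hnd : ∀ g ∈ S, ¬ g.IsDiag := by
    rintro g (⟨hg, -⟩ | hg)
    · exact T.not_isDiag_of_mem_edgeSet hg
    · rw [Set.mem_singleton_iff] at hg; subst hg; simpa using hxne
  have hHE : (fromEdgeSet S).edgeSet = S := by
    rw [edgeSet_fromEdgeSet]
    ext g
    simp only [Set.mem_diff, Set.mem_setOf_eq, and_iff_left_iff_imp]
    exact fun hg => hnd g hg
  have hDel : T.deleteEdges {s(u,v)} ≤ fromEdgeSet S := by
    rw [← edgeSet_subset_edgeSet, edgeSet_deleteEdges, hHE]
    exact Set.subset_union_left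
  have hAdjxy : (fromEdgeSet S).Adj x y := by
    rw [← mem_edgeSet, hHE]; exact Or.inr rfl
  have hreach : ∀ z, (fromEdgeSet S).Reachable x z := by
    intro z
    rcases side_total hT.isConnected.preconnected u v z with hz | hz
    · exact (hux.symm.trans hz).mono hDel
    · exact hAdjxy.reachable.trans (((hvy.symm.trans hz)).mono hDel)
  have hconn : (fromEdgeSet S).Connected :=
    (connected_iff_exists_forall_reachable _).mpr ⟨x, hreach⟩
  have hsub : fromEdgeSet S ≤ G := by
    rw [← edgeSet_subset_edgeSet, hHE]
    rintro g (⟨hg, -⟩ | hg)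
    · exact edgeSet_mono hle hg
    · rw [Set.mem_singleton_iff] at hg; subst hg; exact hxy
  have hacy : (fromEdgeSet S).IsAcyclic := by
    intro vv c hc
    by_cases hmem : s(x,y) ∈ c.edges
    · obtain ⟨-, hr⟩ := adj_and_reachable_delete_edges_iff_exists_cycle.mpr ⟨vv, c, hc, hmem⟩
      have hle2 : (fromEdgeSet S) \ fromEdgeSet {s(x,y)} ≤ T.deleteEdges {s(u,v)} := by
        rw [← edgeSet_subset_edgeSet,
          show (fromEdgeSet S) \ fromEdgeSet {s(x,y)} = (fromEdgeSet S).deleteEdges {s(x,y)}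
            from rfl, edgeSet_deleteEdges, edgeSet_deleteEdges, hHE]
        rintro g ⟨(⟨hg1, hg2⟩ | hg1), hg3⟩
        · exact ⟨hg1, hg2⟩
        · exact absurd hg1 hg3
      exact hsep ((hux.trans (hr.mono hle2)).trans hvy.symm)
    · have hce : ∀ g ∈ c.edges, g ∈ T.edgeSet := by
        intro g hg
        have hg2 := c.edges_subset_edgeSet hg
        rw [hHE] at hg2
        rcases hg2 with ⟨hg1, -⟩ | hg1
        · exact hg1
        · rw [Set.mem_singleton_iff] at hg1; subst hg1; exact absurd hg hmem
      exact hT.IsAcyclic (c.transfer T hce) (hc.transfer hce)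
  exact ⟨hsub, ⟨hconn, hacy⟩, by rw [hHE]; exact Or.inr rfl⟩

lemma swap_tree [DecidableEq V] {G T : SimpleGraph V} (hle : T ≤ G) (hT : T.IsTree)
    {x y u v : V} (hxy : s(x,y) ∈ G.edgeSet) (haT : s(x,y) ∉ T.edgeSet)
    {p : T.Walk x y} (hp : p.IsPath) (hbp : s(u,v) ∈ p.edges) :
    fromEdgeSet ((T.edgeSet \ {s(u,v)}) ∪ {s(x,y)}) ≤ G ∧
    (fromEdgeSet ((T.edgeSet \ {s(u,v)}) ∪ {s(x,y)})).IsTree ∧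
    s(x,y) ∈ (fromEdgeSet ((T.edgeSet \ {s(u,v)}) ∪ {s(x,y)})).edgeSet := by
  have huvT : s(u,v) ∈ T.edgeSet := p.edges_subset_edgeSet hbp
  have hadjuv : T.Adj u v := T.mem_edgeSet.mp huvT
  have hbridge := (isAcyclic_iff_forall_adj_isBridge.mp hT.IsAcyclic) hadjuv
  have hsep : ¬ (T.deleteEdges {s(u,v)}).Reachable u v := (isBridge_iff.mp hbridge)
  have hcount : p.edges.count s(u,v) = 1 := hp.isTrail.count_edges_eq_one hbp
  have hodd : ¬ ((T.deleteEdges {s(u,v)}).Reachable u x ↔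
      (T.deleteEdges {s(u,v)}).Reachable u y) := by
    intro hiff
    have h1 := (parity_count hsep p).mp hiff
    rw [hcount] at h1
    simp at h1
  have htot := side_total hT.isConnected.preconnected u v
  by_cases hx : (T.deleteEdges {s(u,v)}).Reachable u x
  · have hy : ¬ (T.deleteEdges {s(u,v)}).Reachable u y :=
      fun h => hodd ⟨fun _ => h, fun _ => hx⟩
    have hvy : (T.deleteEdges {s(u,v)}).Reachable v y := by
      rcases htot y with h | h
      · exact absurd h hy
      · exact h
    exact swap_aux hle hT hxy haT huvT hsep hx hvy
  · have hy : (T.deleteEdges {s(u,v)}).Reachable u y := by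
      by_contra hy
      exact hodd ⟨fun h => absurd h hx, fun h => absurd h hy⟩
    have hvx : (T.deleteEdges {s(u,v)}).Reachable v x := by
      rcases htot x with h | h
      · exact absurd h hx
      · exact h
    have hswap : (T.edgeSet \ {s(u,v)}) = (T.edgeSet \ {s(v,u)}) := by rw [Sym2.eq_swap]
    have hEq : T.deleteEdges {s(u,v)} = T.deleteEdges {s(v,u)} := by rw [Sym2.eq_swap]
    have huvT' : s(v,u) ∈ T.edgeSet := by rw [Sym2.eq_swap]; exact huvT
    have hsep' : ¬ (T.deleteEdges {s(v,u)}).Reachable v u := by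
      rw [← hEq]; exact fun h => hsep h.symm
    rw [hswap]
    exact swap_aux hle hT hxy haT huvT' hsep' (hEq ▸ hvx) (hEq ▸ hy)

lemma del_connected {G : SimpleGraph V} (hG : G.Connected) {x y : V}
    (hxy : (G.deleteEdges {s(x,y)}).Reachable x y) : (G.deleteEdges {s(x,y)}).Connected := by
  have h : ∀ z, (G.deleteEdges {s(x,y)}).Reachable x z := by
    intro z
    rcases side_total hG.preconnected x y z with h | h
    · exact h
    · exact hxy.trans h
  exact (connected_iff_exists_forall_reachable _).mpr ⟨x, h⟩

lemma exists_spanning_tree [Finite V] :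
    ∀ (n : ℕ) (G : SimpleGraph V), G.edgeSet.ncard ≤ n → G.Connected →
      ∃ T, T ≤ G ∧ T.IsTree := by
  intro n
  induction n with
  | zero =>
    intro G hn hG
    have he : G.edgeSet = ∅ := by
      rw [← Set.ncard_eq_zero (G.edgeSet.toFinite)]
      omega
    have hbot : G = ⊥ := edgeSet_eq_empty.mp he
    exact ⟨G, le_refl _, ⟨hG, by rw [hbot]; exact isAcyclic_bot⟩⟩
  | succ n ih =>
    intro G hn hG
    by_cases hac : G.IsAcyclic
    · exact ⟨G, le_refl _, ⟨hG, hac⟩⟩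
    · rw [isAcyclic_iff_forall_edge_isBridge] at hac
      push_neg at hac
      obtain ⟨e, he, hbr⟩ := hac
      induction e using Sym2.ind with
      | _ x y =>
        have hradj : G.Adj x y := G.mem_edgeSet.mp he
        have hreach : (G.deleteEdges {s(x,y)}).Reachable x y := by
          rw [isBridge_iff] at hbr
          push_neg at hbr
          exact hbr
        have hconn := del_connected hG hreach
        have hcard : (G.deleteEdges {s(x,y)}).edgeSet.ncard ≤ n := by
          rw [edgeSet_deleteEdges]
          have h1 : (G.edgeSet \ {s(x,y)}).ncard = G.edgeSet.ncard - 1 :=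
            Set.ncard_diff_singleton_of_mem he
          have h2 : 0 < G.edgeSet.ncard := (Set.ncard_pos (G.edgeSet.toFinite)).mpr ⟨_, he⟩
          omega
        obtain ⟨T, hT1, hT2⟩ := ih (G.deleteEdges {s(x,y)}) hcard hconn
        exact ⟨T, hT1.trans (deleteEdges_le _), hT2⟩

lemma twt_swap {V : Type*} [Fintype V] [DecidableEq V] (w : Sym2 V → ℝ)
    {T : SimpleGraph V} {a b : Sym2 V} (hb : b ∈ T.edgeSet) (ha : a ∉ T.edgeSet)
    (had : ¬ a.IsDiag) :
    twt w (SimpleGraph.fromEdgeSet ((T.edgeSet \ {b}) ∪ {a})) = twt w T - w b + w a := by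
  classical
  have hfe : (Finset.univ.filter
        (fun g => g ∈ (SimpleGraph.fromEdgeSet ((T.edgeSet \ {b}) ∪ {a})).edgeSet))
      = insert a ((Finset.univ.filter (fun g => g ∈ T.edgeSet)).erase b) := by
    ext g
    simp only [Finset.mem_filter, Finset.mem_univ, true_and, Finset.mem_insert, Finset.mem_erase,
      edgeSet_fromEdgeSet, Set.mem_diff, Set.mem_union, Set.mem_singleton_iff, Set.mem_setOf_eq]
    constructor
    · rintro ⟨(⟨h1, h2⟩ | h1), h3⟩
      · exact Or.inr ⟨h2, h1⟩
      · exact Or.inl h1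
    · rintro (rfl | ⟨h1, h2⟩)
      · exact ⟨Or.inr rfl, had⟩
      · exact ⟨Or.inl ⟨h2, h1⟩, T.not_isDiag_of_mem_edgeSet h2⟩
  have hbF : b ∈ Finset.univ.filter (fun g => g ∈ T.edgeSet) := by
    simp [hb]
  have haF : a ∉ (Finset.univ.filter (fun g => g ∈ T.edgeSet)).erase b := by
    simp [ha]
  have hsum : ∑ g ∈ Finset.univ.filter
        (fun g => g ∈ (SimpleGraph.fromEdgeSet ((T.edgeSet \ {b}) ∪ {a})).edgeSet), w g
      = ∑ g ∈ Finset.univ.filter (fun g => g ∈ T.edgeSet), w g - w b + w a := by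
    rw [hfe, Finset.sum_insert haF, Finset.sum_erase_eq_sub hbF]
    ring
  rw [twt, twt]
  convert hsum

end StmtAux

open StmtAux SimpleGraph in
/-- In a connected weighted graph, for every non-bridge edge `e` there
exist a spanning tree `T⁺` containing `e` of minimum weight among spanning trees
containing `e`, and an edge `f ≠ e`, such that `T⁻ := T⁺ - e + f` is a spanning tree of
minimum weight among those avoiding `e`; i.e. the two constrained optima differ by a
single edge exchange. -/
theorem stmt18 {V : Type*} [Fintype V] [DecidableEq V]
    (G : SimpleGraph V) (hG : G.Connected) (w : Sym2 V → ℝ)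
    (e : Sym2 V) (he : e ∈ G.edgeSet) (hb : ¬ G.IsBridge e) :
    ∃ (Tp : SimpleGraph V) (f : Sym2 V), f ≠ e ∧
      IsSpanningTree G Tp ∧ e ∈ Tp.edgeSet ∧
      (∀ T', IsSpanningTree G T' → e ∈ T'.edgeSet → twt w Tp ≤ twt w T') ∧
      IsSpanningTree G (SimpleGraph.fromEdgeSet ((Tp.edgeSet \ {e}) ∪ {f})) ∧
      e ∉ (SimpleGraph.fromEdgeSet ((Tp.edgeSet \ {e}) ∪ {f})).edgeSet ∧
      (∀ T', IsSpanningTree G T' → e ∉ T'.edgeSet →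
        twt w (SimpleGraph.fromEdgeSet ((Tp.edgeSet \ {e}) ∪ {f})) ≤ twt w T') := by
  classical
  induction e using Sym2.ind with
  | _ x y =>
  have hadj : G.Adj x y := G.mem_edgeSet.mp he
  have hne : x ≠ y := hadj.ne
  -- a spanning tree containing s(x,y)
  obtain ⟨T0, hT0le, hT0⟩ := exists_spanning_tree G.edgeSet.ncard G le_rfl hG
  have hexP : ∃ T, (T ≤ G ∧ T.IsTree) ∧ s(x,y) ∈ T.edgeSet := by
    by_cases hmem : s(x,y) ∈ T0.edgeSet
    · exact ⟨T0, ⟨hT0le, hT0⟩, hmem⟩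
    · obtain ⟨q0⟩ := hT0.isConnected.preconnected x y
      obtain ⟨q, hq⟩ := q0.toPath
      cases q with
      | nil => exact absurd rfl hne
      | @cons _ m _ h q' =>
        have hbp : s(x, m) ∈ (SimpleGraph.Walk.cons h q').edges := by
          rw [Walk.edges_cons]; exact List.mem_cons_self
        obtain ⟨h1, h2, h3⟩ := swap_tree hT0le hT0 he hmem hq hbp
        exact ⟨_, ⟨h1, h2⟩, h3⟩
  -- a spanning tree avoiding s(x,y)
  have hreachxy : (G.deleteEdges {s(x,y)}).Reachable x y := by
    rw [isBridge_iff] at hb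
    push_neg at hb
    exact hb
  have hGdel := del_connected hG hreachxy
  obtain ⟨T2, hT2le, hT2⟩ :=
    exists_spanning_tree (G.deleteEdges {s(x,y)}).edgeSet.ncard (G.deleteEdges {s(x,y)})
      le_rfl hGdel
  have hT2e : s(x,y) ∉ T2.edgeSet := by
    intro hmem
    have h2 := edgeSet_mono hT2le hmem
    rw [edgeSet_deleteEdges] at h2
    exact h2.2 rfl
  have hexM : ∃ T, (T ≤ G ∧ T.IsTree) ∧ s(x,y) ∉ T.edgeSet :=
    ⟨T2, ⟨hT2le.trans (deleteEdges_le _), hT2⟩, hT2e⟩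
  -- constrained minimizers
  obtain ⟨Tp, ⟨⟨hTple, hTptree⟩, hTpe⟩, hTpmin⟩ :=
    Set.exists_min_image {T : SimpleGraph V | (T ≤ G ∧ T.IsTree) ∧ s(x,y) ∈ T.edgeSet}
      (twt w) (Set.toFinite _) hexP
  obtain ⟨Tm, ⟨⟨hTmle, hTmtree⟩, hTme⟩, hTmmin⟩ :=
    Set.exists_min_image {T : SimpleGraph V | (T ≤ G ∧ T.IsTree) ∧ s(x,y) ∉ T.edgeSet}
      (twt w) (Set.toFinite _) hexM
  -- the cut of Tp − e
  have hsepP : ¬ (Tp.deleteEdges {s(x,y)}).Reachable x y :=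
    (isBridge_iff.mp ((isAcyclic_iff_forall_adj_isBridge.mp hTptree.IsAcyclic)
      (Tp.mem_edgeSet.mp hTpe)))
  have htot : ∀ z, (Tp.deleteEdges {s(x,y)}).Reachable x z ∨
      (Tp.deleteEdges {s(x,y)}).Reachable y z :=
    side_total hTptree.isConnected.preconnected x y
  have hdisj : ∀ z, ¬ ((Tp.deleteEdges {s(x,y)}).Reachable x z ∧
      (Tp.deleteEdges {s(x,y)}).Reachable y z) :=
    fun z hz => hsepP (hz.1.trans hz.2.symm)
  -- path in Tm from x to y, crossing edge
  obtain ⟨qm0⟩ := hTmtree.isConnected.preconnected x y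
  obtain ⟨qm, hqm⟩ := qm0.toPath
  obtain ⟨u, v, huv, hXu, hYv⟩ :=
    cross_walk (fun z => (Tp.deleteEdges {s(x,y)}).Reachable x z)
      (fun z => (Tp.deleteEdges {s(x,y)}).Reachable y z) htot hdisj qm
      (Reachable.refl x) (Reachable.refl y)
  have hfTm : s(u,v) ∈ Tm.edgeSet := qm.edges_subset_edgeSet huv
  have hfG : s(u,v) ∈ G.edgeSet := edgeSet_mono hTmle hfTm
  have hfne : s(u,v) ≠ s(x,y) := fun hh => hTme (hh ▸ hfTm)
  have hfTp : s(u,v) ∉ Tp.edgeSet := by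
    intro hmem
    have hadjDel : (Tp.deleteEdges {s(x,y)}).Adj u v :=
      deleteEdges_adj.mpr ⟨Tp.mem_edgeSet.mp hmem, by simpa using hfne⟩
    exact hdisj v ⟨hXu.trans hadjDel.reachable, hYv⟩
  -- T⁻ := Tp − e + f
  obtain ⟨hTTle, hTTtree, hTTf⟩ := swap_aux hTple hTptree hfG hfTp hTpe hsepP hXu hYv
  -- K := Tm − f + e
  obtain ⟨hKle, hKtree, hKe⟩ := swap_tree hTmle hTmtree he hTme hqm huv
  -- weights
  have hwTT : twt w (SimpleGraph.fromEdgeSet ((Tp.edgeSet \ {s(x,y)}) ∪ {s(u,v)}))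
      = twt w Tp - w s(x,y) + w s(u,v) :=
    twt_swap w hTpe hfTp (Tm.not_isDiag_of_mem_edgeSet hfTm)
  have hwK : twt w (SimpleGraph.fromEdgeSet ((Tm.edgeSet \ {s(u,v)}) ∪ {s(x,y)}))
      = twt w Tm - w s(u,v) + w s(x,y) :=
    twt_swap w hfTm hTme (G.not_isDiag_of_mem_edgeSet he)
  have hPK : twt w Tp ≤ twt w (SimpleGraph.fromEdgeSet ((Tm.edgeSet \ {s(u,v)}) ∪ {s(x,y)})) :=
    hTpmin _ ⟨⟨hKle, hKtree⟩, hKe⟩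
  refine ⟨Tp, s(u,v), hfne, ⟨hTple, hTptree⟩, hTpe, ?_, ⟨hTTle, hTTtree⟩, ?_, ?_⟩
  · intro T' hT' hT'e
    exact hTpmin T' ⟨⟨hT'.1, hT'.2⟩, hT'e⟩
  · intro hmem
    rw [edgeSet_fromEdgeSet] at hmem
    rcases hmem.1 with ⟨-, h2⟩ | h2
    · exact h2 rfl
    · rw [Set.mem_singleton_iff] at h2
      exact hfne h2.symm
  · intro T' hT' hT'e
    have h1 : twt w Tm ≤ twt w T' := hTmmin T' ⟨⟨hT'.1, hT'.2⟩, hT'e⟩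
    rw [hwTT]
    rw [hwK] at hPK
    linarith
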